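/- arXiv:1702.07365 — 2 statements merged into one kernel-verified Lean document; each statement's English description precedes it below -/
import Mathlib

section
/- Let 𝒜 = {a_1 < a_2 < …} be an infinite set of natural numbers and let α ∈ ℝ. Suppose that for every s > 0, F(𝒜, α, s, N) → 2s as N → ∞. Then the sequence (α·a_n mod 1) is equidistributed in ℝ/ℤ; that is, for every interval I ⊆ [0,1), (1/N)·#{n ≤ N : α·a_n mod 1 ∈ I} → |I| as N → ∞. -/
open MeasureTheory Filter Finset
open scoped Classical

/-- Distance from a real number to the nearest integer. -/
noncomputable def intDist (x : ℝ) : ℝ := |x - round x|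

/-- The pair correlation function `F(𝒜, α, s, N)` for the sequence `a` (1-indexed):
`(1/N) · #{(i,j) : 1 ≤ i,j ≤ N, i ≠ j, ‖α(a_i − a_j)‖ ≤ s/N}`. -/
noncomputable def pairCorr (a : ℕ → ℕ) (α s : ℝ) (N : ℕ) : ℝ :=
  (((Finset.Icc 1 N ×ˢ Finset.Icc 1 N).filter
    (fun p => p.1 ≠ p.2 ∧ intDist (α * ((a p.1 : ℝ) - (a p.2 : ℝ))) ≤ s / N)).card : ℝ) / N

/-- A (strictly increasing) sequence is metric Poissonian if for a.e. `α ∈ [0,1]` and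
every `s > 0`, `F(𝒜, α, s, N) → 2s`. -/
def MetricPoissonian (a : ℕ → ℕ) : Prop :=
  ∀ᵐ α ∂(volume.restrict (Set.Icc (0:ℝ) 1)),
    ∀ s : ℝ, 0 < s → Tendsto (fun N => pairCorr a α s N) atTop (nhds (2 * s))

/-- The additive energy of a finite set of naturals: the number of quadruples
`(b₁,b₂,b₃,b₄) ∈ B⁴` with `b₁ + b₂ = b₃ + b₄`. -/
def addEnergy (B : Finset ℕ) : ℕ :=
  ((B ×ˢ B ×ˢ B ×ˢ B).filter (fun q => q.1 + q.2.1 = q.2.2.1 + q.2.2.2)).card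

/-- The first `N` elements of the set associated to the (1-indexed) sequence `a`. -/
def firstN (a : ℕ → ℕ) (N : ℕ) : Finset ℕ := (Finset.Icc 1 N).image a

/-- The increasing sequence of all primes, 1-indexed: `primeSeq 1 = 2`, `primeSeq 2 = 3`, … -/
noncomputable def primeSeq (n : ℕ) : ℕ := Nat.nth Nat.Prime (n - 1)

/-!
Put `δ = S / N` and let `Z t` be the number of the points `α a_n` (mod 1), `n ≤ N`, lying in the
arc `[t, t + δ)`. On average over `t` the count `Z` equals `S`, and its second moment is `S` plus
the total overlap `∑_{i ≠ j} max 0 (δ - ‖α (a_i - a_j)‖)`; writing the overlap as an integral of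
pair counts over scales `s ≤ S`, Poissonian pair correlation bounds it by `S² + o(1)`, so `Z` has
variance `O(S)`. If an interval `[u, v)` contained `(v - u + ε) N` of the points, `Z` would exceed
its mean by roughly `ε S` on the arcs meeting `[u, v)`, which Cauchy–Schwarz rules out once
`S ≫ ε⁻²`. Averages over `t` are taken over the grid `m / M`, whose rounding errors vanish as
`M → ∞`. Upper bounds for all intervals give the lower bounds by passing to complements.
-/

open Int (fract)

noncomputable def gridCount (M : ℕ) (P : ℝ → Prop) : ℕ := #((range M).filter fun m : ℕ => P (m / M))

lemma abs_card_Ioc_natFloor_sub_le {A B : ℝ} (hA : 0 ≤ A) (hAB : A ≤ B) :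
    |((Ioc ⌊A⌋₊ ⌊B⌋₊).card : ℝ) - (B - A)| ≤ 1 := by
  rw [Nat.card_Ioc, Nat.cast_sub (Nat.floor_mono hAB), abs_le]
  have := Nat.floor_le hA
  have := Nat.lt_floor_add_one A
  have := Nat.floor_le (hA.trans hAB)
  have := Nat.lt_floor_add_one B
  constructor <;> linarith

lemma mem_Ico_floor_add_one_iff {x : ℝ} (hx : 0 ≤ x) (M m : ℕ) :
    m ∈ Ico (⌊x⌋₊ + 1) (⌊x⌋₊ + 1 + M) ↔ x < m ∧ (m : ℝ) ≤ x + M := by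
  rw [mem_Ico, Nat.add_one_le_iff, Nat.floor_lt hx]
  refine and_congr_right fun _ => ⟨fun h => ?_, fun h => ?_⟩
  · have : (m : ℝ) ≤ ⌊x⌋₊ + M := by exact_mod_cast (by omega : m ≤ ⌊x⌋₊ + M)
    linarith [Nat.floor_le hx]
  · have := Nat.lt_floor_add_one x
    exact_mod_cast (by linarith : (m : ℝ) < ⌊x⌋₊ + 1 + M)

lemma gridCount_eq_card_filter_Ico {M : ℕ} (hM : 0 < M) {P : ℝ → Prop}
    (hP : Function.Periodic P 1) (n : ℕ) :
    gridCount M P = #{m ∈ Ico n (n + M) | P ((m : ℕ) / M)} := by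
  have hM' : (M : ℝ) ≠ 0 := by positivity
  have hper : Function.Periodic (fun m : ℕ => P (m / M)) M := fun m => by
    simp only [Nat.cast_add, add_div, div_self hM', hP _]
  rw [Nat.filter_Ico_card_eq_of_periodic _ _ _ hper, Nat.count_eq_card_filter_range]
  rfl

lemma abs_gridCount_fract_sub_mem_Ico_sub_le {M : ℕ} (hM : 0 < M) (c : ℝ) {p q : ℝ}
    (hp : 0 ≤ p) (hpq : p ≤ q) (hq : q ≤ 1) :
    |(gridCount M (fun t => fract (c - t) ∈ Set.Ico p q) : ℝ) - (q - p) * M| ≤ 1 := by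
  have hM' : (0 : ℝ) < M := by exact_mod_cast hM
  have hc0 := Int.fract_nonneg c
  have hc1 := Int.fract_lt_one c
  set c' := fract c + 1 with hc'
  set x := fract c * M with hx
  have hx0 : 0 ≤ x := by positivity
  have hper : Function.Periodic (fun t => fract (c - t) ∈ Set.Ico p q) 1 := fun t => by
    simp only [← sub_sub, Int.fract_sub_one]
  -- On the window `x < m ≤ x + M` the number `c' - m / M` lies in `[0, 1)`.
  have hfilter : {m ∈ Ico (⌊x⌋₊ + 1) (⌊x⌋₊ + 1 + M) | fract (c - (m : ℕ) / M) ∈ Set.Ico p q}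
      = Ioc ⌊(c' - q) * M⌋₊ ⌊(c' - p) * M⌋₊ := by
    ext m
    set y := c' - m / M with hy
    have hshift : fract (c - m / M) = fract y :=
      Int.fract_eq_fract.2 ⟨⌊c⌋ - 1, by rw [hy, hc', Int.fract]; push_cast; ring⟩
    have hm : (m : ℝ) = (c' - y) * M := by rw [hy]; field_simp; ring
    have hlt : ∀ r : ℝ, r * M < m ↔ y < c' - r := fun r => by
      rw [hm, mul_lt_mul_iff_left₀ hM']; constructor <;> intro <;> linarith
    have hle : ∀ r : ℝ, (m : ℝ) ≤ r * M ↔ c' - r ≤ y := fun r => by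
      rw [hm, mul_le_mul_iff_left₀ hM']; constructor <;> intro <;> linarith
    rw [mem_filter, mem_Ico_floor_add_one_iff hx0, mem_Ioc, Nat.floor_lt (by nlinarith),
      Nat.le_floor_iff (by nlinarith), hx, show fract c * M + M = (fract c + 1) * M by ring,
      hlt, hle, hlt, hle, hshift]
    simp only [Set.mem_Ico, hc', sub_sub_cancel, add_sub_cancel_left, sub_self]
    constructor
    · rintro ⟨⟨h1, h0⟩, hpy, hyq⟩
      rw [Int.fract_eq_self.2 ⟨h0, h1⟩] at hpy hyq
      exact ⟨hyq, hpy⟩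
    · rintro ⟨hyq, hpy⟩
      have h01 : 0 ≤ y ∧ y < 1 := ⟨by linarith, by linarith⟩
      rw [Int.fract_eq_self.2 h01]
      exact ⟨h01.symm, hpy, hyq⟩
  rw [gridCount_eq_card_filter_Ico hM hper (⌊x⌋₊ + 1), filter_congr_decidable, hfilter]
  have := abs_card_Ioc_natFloor_sub_le (A := (c' - q) * M) (B := (c' - p) * M)
    (by nlinarith) (by nlinarith)
  rwa [show (c' - p) * M - (c' - q) * M = (q - p) * M by ring] at this

lemma gridCount_le_add {M : ℕ} {P Q R : ℝ → Prop} (h : ∀ t, P t → Q t ∨ R t) :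
    gridCount M P ≤ gridCount M Q + gridCount M R := by
  unfold gridCount
  refine (card_le_card fun m hm => ?_).trans (card_union_le _ _)
  simp only [mem_filter, mem_union] at hm ⊢
  exact (h _ hm.2).imp (⟨hm.1, ·⟩) (⟨hm.1, ·⟩)

lemma abs_gridCount_fract_sub_lt_sub_le {M : ℕ} (hM : 0 < M) (c : ℝ) {δ : ℝ}
    (hδ0 : 0 ≤ δ) (hδ1 : δ ≤ 1) :
    |(gridCount M (fun t => fract (c - t) < δ) : ℝ) - δ * M| ≤ 1 := by
  simpa [Set.mem_Ico, Int.fract_nonneg] using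
    abs_gridCount_fract_sub_mem_Ico_sub_le hM c le_rfl hδ0 hδ1

lemma gridCount_fract_sub_lt_le {M : ℕ} (hM : 0 < M) (c : ℝ) {δ : ℝ} (hδ0 : 0 ≤ δ) (hδ1 : δ ≤ 1) :
    (gridCount M (fun t => fract (c - t) < δ) : ℝ) ≤ δ * M + 1 := by
  linarith [(abs_le.1 (abs_gridCount_fract_sub_lt_sub_le hM c hδ0 hδ1)).2]

lemma le_gridCount_fract_sub_lt {M : ℕ} (hM : 0 < M) (c : ℝ) {δ : ℝ} (hδ0 : 0 ≤ δ) (hδ1 : δ ≤ 1) :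
    δ * M - 1 ≤ gridCount M (fun t => fract (c - t) < δ) := by
  linarith [(abs_le.1 (abs_gridCount_fract_sub_lt_sub_le hM c hδ0 hδ1)).1]

lemma fract_sub_mem_Ico_or_lt {c c' t δ : ℝ} (ha : fract (c - t) < δ)
    (hb : fract (c' - t) < δ) :
    fract (c - t) ∈ Set.Ico (min (fract (c - c')) δ) δ ∨
      fract (c - t) < δ + fract (c - c') - 1 := by
  set a := fract (c - t)
  set b := fract (c' - t)
  have ha0 : 0 ≤ a := Int.fract_nonneg _
  have hb0 : 0 ≤ b := Int.fract_nonneg _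
  have ha1 : a < 1 := Int.fract_lt_one _
  have hb1 : b < 1 := Int.fract_lt_one _
  have hfr : fract (a - b) = fract (c - c') :=
    Int.fract_eq_fract.2 ⟨⌊c' - t⌋ - ⌊c - t⌋, by simp only [a, b, Int.fract]; push_cast; ring⟩
  rcases le_or_gt b a with hba | hab
  · have he : fract (c - c') = a - b := by
      rw [← hfr, Int.fract_eq_self.2 ⟨by linarith, by linarith⟩]
    exact Or.inl ⟨(min_le_left _ _).trans (by linarith), ha⟩
  · have he : fract (c - c') = a - b + 1 := by
      rw [← hfr, ← Int.fract_add_one, Int.fract_eq_self.2 ⟨by linarith, by linarith⟩]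
    exact Or.inr (by linarith)

lemma gridCount_fract_sub_lt_and_lt_le {M : ℕ} (hM : 0 < M) (c c' : ℝ) {δ : ℝ}
    (hδ0 : 0 ≤ δ) (hδ : δ ≤ 1 / 2) :
    (gridCount M (fun t => fract (c - t) < δ ∧ fract (c' - t) < δ) : ℝ)
      ≤ max 0 (δ - intDist (c - c')) * M + 2 := by
  set e := fract (c - c')
  have he0 : 0 ≤ e := Int.fract_nonneg _
  have he1 : e < 1 := Int.fract_lt_one _
  have hsplit := gridCount_le_add (M := M)
    (P := fun t => fract (c - t) < δ ∧ fract (c' - t) < δ)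
    (Q := fun t => fract (c - t) ∈ Set.Ico (min e δ) δ)
    (R := fun t => fract (c - t) ∈ Set.Ico 0 (max 0 (δ + e - 1)))
    fun t ht => (fract_sub_mem_Ico_or_lt ht.1 ht.2).imp id
      fun h => ⟨Int.fract_nonneg _, lt_max_of_lt_right h⟩
  have hQ := (abs_le.1 (abs_gridCount_fract_sub_mem_Ico_sub_le hM c (le_min he0 hδ0)
    (min_le_right _ _) (by linarith))).2
  have hR := (abs_le.1 (abs_gridCount_fract_sub_mem_Ico_sub_le hM c (q := max 0 (δ + e - 1))
    le_rfl (le_max_left _ _) (max_le (by linarith) (by linarith)))).2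
  have hlen : δ - min e δ + (max 0 (δ + e - 1) - 0) ≤ max 0 (δ - intDist (c - c')) := by
    rw [intDist, abs_sub_round_eq_min]
    simp only [min_def, max_def]
    split_ifs <;> linarith
  have hM0 : (0 : ℝ) ≤ M := by positivity
  calc (gridCount M (fun t => fract (c - t) < δ ∧ fract (c' - t) < δ) : ℝ)
      ≤ gridCount M (fun t => fract (c - t) ∈ Set.Ico (min e δ) δ)
        + gridCount M (fun t => fract (c - t) ∈ Set.Ico 0 (max 0 (δ + e - 1))) := by
        exact_mod_cast hsplit
    _ ≤ max 0 (δ - intDist (c - c')) * M + 2 := by nlinarith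

/-- `fract (x i - t) < δ` says that `x i` lies in the arc `[t, t + δ)` of `ℝ/ℤ`. -/
noncomputable def arcCount {ι : Type*} (s : Finset ι) (x : ι → ℝ) (δ t : ℝ) : ℕ :=
  #{i ∈ s | fract (x i - t) < δ}

/-- For `δ ≤ 1 / 2`, `max 0 (δ - intDist (x i - x j))` is the length of the intersection of the
arcs of length `δ` starting at `x i` and at `x j`. -/
noncomputable def overlapSum {ι : Type*} (s : Finset ι) (x : ι → ℝ) (δ : ℝ) : ℝ :=
  ∑ p ∈ s.offDiag, max 0 (δ - intDist (x p.1 - x p.2))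

section GridMoments

variable {ι : Type*} (s : Finset ι) (x : ι → ℝ) (δ : ℝ) {M : ℕ}

lemma sum_arcCount_eq_sum_card (T : Finset ℕ) :
    ∑ m ∈ T, arcCount s x δ (m / M)
      = ∑ i ∈ s, #(T.filter fun m : ℕ => fract (x i - m / M) < δ) := by
  simp only [arcCount, card_filter]
  exact sum_comm

lemma sum_arcCount_sq_eq_sum_gridCount :
    ∑ m ∈ range M, arcCount s x δ ((m : ℕ) / M) ^ 2
      = ∑ p ∈ s ×ˢ s, gridCount M (fun t => fract (x p.1 - t) < δ ∧ fract (x p.2 - t) < δ) := by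
  simp only [arcCount, gridCount, card_filter, sq, sum_mul_sum, ite_zero_mul_ite_zero, mul_one,
    sum_product]
  rw [sum_comm]
  exact sum_congr rfl fun _ _ => sum_comm

variable {s x δ}

lemma sum_arcCount_ge (hM : 0 < M) (hδ0 : 0 ≤ δ) (hδ1 : δ ≤ 1) :
    #s * δ * M - #s ≤ ∑ m ∈ range M, (arcCount s x δ ((m : ℕ) / M) : ℝ) := by
  rw [← Nat.cast_sum, sum_arcCount_eq_sum_card, Nat.cast_sum]
  change _ ≤ ∑ i ∈ s, (gridCount M (fun t => fract (x i - t) < δ) : ℝ)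
  calc #s * δ * M - #s = ∑ i ∈ s, (δ * M - 1) := by rw [sum_const, nsmul_eq_mul]; ring
    _ ≤ _ := sum_le_sum fun i _ => le_gridCount_fract_sub_lt hM (x i) hδ0 hδ1

lemma sum_arcCount_sq_le (hM : 0 < M) (hδ0 : 0 ≤ δ) (hδ : δ ≤ 1 / 2) :
    ∑ m ∈ range M, (arcCount s x δ ((m : ℕ) / M) : ℝ) ^ 2
      ≤ (#s * δ + overlapSum s x δ) * M + #s + 2 * #s ^ 2 := by
  have hsq := congrArg (Nat.cast (R := ℝ)) (sum_arcCount_sq_eq_sum_gridCount s x δ (M := M))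
  rw [← diag_union_offDiag, sum_union (disjoint_diag_offDiag s), sum_diag] at hsq
  push_cast at hsq
  rw [hsq]
  have hdiag : ∑ i ∈ s, (gridCount M (fun t => fract (x i - t) < δ ∧ fract (x i - t) < δ) : ℝ)
      ≤ #s * δ * M + #s := by
    simp only [and_self]
    calc _ ≤ ∑ i ∈ s, (δ * M + 1) :=
          sum_le_sum fun i _ => gridCount_fract_sub_lt_le hM (x i) hδ0 (by linarith)
      _ = _ := by rw [sum_const, nsmul_eq_mul]; ring
  have hoff : ∑ p ∈ s.offDiag,
      (gridCount M (fun t => fract (x p.1 - t) < δ ∧ fract (x p.2 - t) < δ) : ℝ)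
      ≤ overlapSum s x δ * M + 2 * #s ^ 2 := by
    have hcard : (#s.offDiag : ℝ) ≤ #s ^ 2 := by
      rw [sq]; exact_mod_cast (offDiag_card s).le.trans (Nat.sub_le _ _)
    calc _ ≤ ∑ p ∈ s.offDiag, (max 0 (δ - intDist (x p.1 - x p.2)) * M + 2) :=
          sum_le_sum fun p _ => by
            simpa [mul_sub] using gridCount_fract_sub_lt_and_lt_le hM (x p.1) (x p.2) hδ0 hδ
      _ = overlapSum s x δ * M + 2 * #s.offDiag := by
          rw [sum_add_distrib, ← sum_mul, sum_const, nsmul_eq_mul, overlapSum]; ring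
      _ ≤ _ := by linarith
  linarith

lemma sum_arcCount_sub_sq_le (hM : 0 < M) (hδ0 : 0 ≤ δ) (hδ : δ ≤ 1 / 2) :
    ∑ m ∈ range M, ((arcCount s x δ ((m : ℕ) / M) : ℝ) - #s * δ) ^ 2
      ≤ (#s * δ + overlapSum s x δ - (#s * δ) ^ 2) * M + (#s + 2 * #s ^ 2 + 2 * (#s * δ) * #s) := by
  have h1 := sum_arcCount_ge (s := s) (x := x) hM hδ0 (by linarith)
  have h2 := sum_arcCount_sq_le (s := s) (x := x) hM hδ0 hδ
  simp only [sub_sq, sum_add_distrib, sum_sub_distrib, ← sum_mul, ← mul_sum, sum_const, card_range,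
    nsmul_eq_mul]
  nlinarith [mul_le_mul_of_nonneg_left h1 (by positivity : (0 : ℝ) ≤ 2 * (#s * δ))]

lemma fract_sub_lt_of_fract_mem_Ico {y t u v δ : ℝ} (hy : fract y ∈ Set.Ico u v)
    (ht : fract (y - t) < δ) (hvδ : v - u + δ ≤ 1) : fract (v - t) < v - u + δ := by
  have h0 := Int.fract_nonneg (y - t)
  have hfr : fract (v - t) = v - fract y + fract (y - t) :=
    Int.fract_eq_iff.2 ⟨by linarith [hy.2], by linarith [hy.1],
      ⌊y - t⌋ - ⌊y⌋, by rw [Int.fract, Int.fract]; push_cast; ring⟩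
  linarith [hy.1]

lemma sum_arcCount_sub_ge {u v : ℝ} (hM : 0 < M) (hδ0 : 0 ≤ δ) (huv : u ≤ v)
    (hvδ : v - u + δ ≤ 1) :
    #{i ∈ s | fract (x i) ∈ Set.Ico u v} * (δ * M - 1) - #s * δ * ((v - u + δ) * M + 1)
      ≤ ∑ m ∈ (range M).filter (fun m : ℕ => fract (v - m / M) < v - u + δ),
          ((arcCount s x δ ((m : ℕ) / M) : ℝ) - #s * δ) := by
  set R := (range M).filter (fun m : ℕ => fract (v - m / M) < v - u + δ)
  have hR : (#R : ℝ) ≤ (v - u + δ) * M + 1 :=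
    gridCount_fract_sub_lt_le hM v (by linarith) hvδ
  have hrow : ∀ i ∈ s.filter (fun i => fract (x i) ∈ Set.Ico u v),
      δ * M - 1 ≤ (#(R.filter fun m : ℕ => fract (x i - m / M) < δ) : ℝ) := by
    intro i hi
    rw [mem_filter] at hi
    have hsub : R.filter (fun m : ℕ => fract (x i - m / M) < δ)
        = (range M).filter (fun m : ℕ => fract (x i - m / M) < δ) := by
      rw [filter_filter]
      exact filter_congr fun m _ =>
        ⟨And.right, fun h => ⟨fract_sub_lt_of_fract_mem_Ico hi.2 h hvδ, h⟩⟩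
    rw [hsub]
    exact le_gridCount_fract_sub_lt hM (x i) hδ0 (by linarith)
  have hZR : #{i ∈ s | fract (x i) ∈ Set.Ico u v} * (δ * M - 1)
      ≤ ∑ m ∈ R, (arcCount s x δ ((m : ℕ) / M) : ℝ) := by
    rw [← Nat.cast_sum, sum_arcCount_eq_sum_card, Nat.cast_sum]
    calc _ = ∑ i ∈ s.filter (fun i => fract (x i) ∈ Set.Ico u v), (δ * M - 1) := by
          rw [sum_const, nsmul_eq_mul]
      _ ≤ _ := sum_le_sum hrow
      _ ≤ _ := sum_le_sum_of_subset_of_nonneg (filter_subset _ _) fun _ _ _ => by positivity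
  rw [sum_sub_distrib, sum_const, nsmul_eq_mul]
  nlinarith [mul_le_mul_of_nonneg_left hR (by positivity : (0 : ℝ) ≤ #s * δ)]

end GridMoments

lemma le_sqrt_mul_of_forall_sq_le {A B C c D d : ℝ} (T : ℕ → ℝ)
    (hlow : ∀ M : ℕ, 0 < M → A * M - B ≤ T M)
    (hsq : ∀ M : ℕ, 0 < M → T M ^ 2 ≤ (C * M + c) * (D * M + d)) : A ≤ √(C * D) := by
  by_contra! hA
  have hA0 : 0 < A := (Real.sqrt_nonneg _).trans_lt hA
  have hCD : C * D < A ^ 2 := (Real.sqrt_lt' hA0).1 hA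
  have hlim : ∀ e : ℝ, Tendsto (fun M : ℕ => e / M) atTop (nhds 0) :=
    fun e => tendsto_const_div_atTop_nhds_zero_nat e
  have hl : Tendsto (fun M : ℕ => (A - B / M) ^ 2) atTop (nhds (A ^ 2)) := by
    simpa using (tendsto_const_nhds.sub (hlim B)).pow 2
  have hr : Tendsto (fun M : ℕ => (C + c / M) * (D + d / M)) atTop (nhds (C * D)) := by
    simpa using (tendsto_const_nhds.add (hlim c)).mul (tendsto_const_nhds.add (hlim d))
  have hev : ∀ᶠ M : ℕ in atTop, (A - B / M) ^ 2 ≤ (C + c / M) * (D + d / M) := by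
    filter_upwards [eventually_gt_atTop 0,
      tendsto_natCast_atTop_atTop.eventually_ge_atTop (B / A)] with M hM hMB
    have hM' : (0 : ℝ) < M := by exact_mod_cast hM
    have h0 : 0 ≤ A * M - B := by rw [div_le_iff₀ hA0] at hMB; linarith
    have := (pow_le_pow_left₀ h0 (hlow M hM) 2).trans (hsq M hM)
    calc (A - B / M) ^ 2 = (A * M - B) ^ 2 / M ^ 2 := by field_simp
      _ ≤ (C * M + c) * (D * M + d) / M ^ 2 := by gcongr
      _ = _ := by field_simp
  exact hCD.not_ge (le_of_tendsto_of_tendsto hl hr hev)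

theorem mul_card_fract_mem_Ico_sub_le_sqrt {ι : Type*} (s : Finset ι) (x : ι → ℝ) {δ u v : ℝ}
    (hδ0 : 0 ≤ δ) (hδ : δ ≤ 1 / 2) (huv : u ≤ v) (hvδ : v - u + δ ≤ 1) :
    δ * #{i ∈ s | fract (x i) ∈ Set.Ico u v} - #s * δ * (v - u + δ)
      ≤ √((v - u + δ) * (#s * δ + overlapSum s x δ - (#s * δ) ^ 2)) := by
  -- `R M` contains every grid point whose arc `[t, t + δ)` meets a point in `[u, v)`.
  set R := fun M : ℕ => (range M).filter (fun m : ℕ => fract (v - m / M) < v - u + δ)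
  refine le_sqrt_mul_of_forall_sq_le (B := #{i ∈ s | fract (x i) ∈ Set.Ico u v} + #s * δ) (c := 1)
    (d := #s + 2 * #s ^ 2 + 2 * (#s * δ) * #s)
    (fun M => ∑ m ∈ R M, ((arcCount s x δ ((m : ℕ) / M) : ℝ) - #s * δ))
    (fun M hM => ?_) (fun M hM => ?_)
  · linarith [sum_arcCount_sub_ge (s := s) (x := x) hM hδ0 huv hvδ]
  · have hR : (#(R M) : ℝ) ≤ (v - u + δ) * M + 1 :=
      gridCount_fract_sub_lt_le hM v (by linarith) hvδ
    calc _ ≤ #(R M) * ∑ m ∈ R M, ((arcCount s x δ ((m : ℕ) / M) : ℝ) - #s * δ) ^ 2 :=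
          sq_sum_le_card_mul_sum_sq
      _ ≤ ((v - u + δ) * M + 1)
            * ∑ m ∈ range M, ((arcCount s x δ ((m : ℕ) / M) : ℝ) - #s * δ) ^ 2 :=
          mul_le_mul hR (sum_le_sum_of_subset_of_nonneg (filter_subset _ _)
            fun _ _ _ => sq_nonneg _) (sum_nonneg fun _ _ => sq_nonneg _) (by positivity)
      _ ≤ _ := mul_le_mul_of_nonneg_left (sum_arcCount_sub_sq_le hM hδ0 hδ) (by positivity)

lemma max_zero_sub_le_mul_card_filter {δ d : ℝ} (hδ : 0 ≤ δ) (hd : 0 ≤ d) {K : ℕ} (hK : 0 < K) :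
    max 0 (δ - d) ≤ δ / K * #{k ∈ range K | d ≤ ((k : ℕ) + 1) * δ / K} := by
  set g : ℕ → ℝ := fun k => max 0 (k * δ / K - d)
  have hstep : ∀ k ∈ range K, g (k + 1) - g k ≤ δ / K * if d ≤ (k + 1) * δ / K then 1 else 0 := by
    intro k _
    have hk : ((k : ℝ) + 1) * δ / K = k * δ / K + δ / K := by ring
    have hδK : 0 ≤ δ / K := by positivity
    simp only [g]
    push_cast
    rw [hk]
    split_ifs <;> simp only [max_def] <;> split_ifs <;> linarith
  calc max 0 (δ - d) = g K - g 0 := by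
        have hK' : (K : ℝ) ≠ 0 := by positivity
        simp [g, hd, hK']
    _ = ∑ k ∈ range K, (g (k + 1) - g k) := (sum_range_sub g K).symm
    _ ≤ _ := sum_le_sum hstep
    _ = _ := by rw [← mul_sum, card_filter]; push_cast; rfl

lemma pairCorr_eq_card_offDiag_div (a : ℕ → ℕ) (α s : ℝ) (N : ℕ) :
    pairCorr a α s N = #{p ∈ (Icc 1 N).offDiag | intDist (α * a p.1 - α * a p.2) ≤ s / N} / N := by
  unfold pairCorr
  congr 3
  ext p
  simp [mem_offDiag, mul_sub, and_assoc]

lemma overlapSum_le_sum_pairCorr (a : ℕ → ℕ) (α : ℝ) {S : ℝ} (hS : 0 ≤ S) {K : ℕ} (hK : 0 < K)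
    (N : ℕ) :
    overlapSum (Icc 1 N) (fun n => α * a n) (S / N)
      ≤ S / K * ∑ k ∈ range K, pairCorr a α (((k : ℕ) + 1) * S / K) N := by
  have hswap : ∑ p ∈ (Icc 1 N).offDiag, (#{k ∈ range K | intDist (α * a p.1 - α * a p.2)
        ≤ ((k : ℕ) + 1) * (S / N) / K} : ℝ)
      = ∑ k ∈ range K, (#{p ∈ (Icc 1 N).offDiag |
          intDist (α * a p.1 - α * a p.2) ≤ ((k : ℕ) + 1) * S / K / N} : ℝ) := by
    simp only [card_filter, Nat.cast_sum]
    rw [sum_comm]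
    refine sum_congr rfl fun k _ => sum_congr rfl fun p _ => ?_
    rw [show ((k : ℝ) + 1) * (S / N) / K = (k + 1) * S / K / N by ring]
  calc overlapSum (Icc 1 N) (fun n => α * a n) (S / N)
      ≤ ∑ p ∈ (Icc 1 N).offDiag, S / N / K * #{k ∈ range K | intDist (α * a p.1 - α * a p.2)
          ≤ ((k : ℕ) + 1) * (S / N) / K} :=
        sum_le_sum fun p _ => max_zero_sub_le_mul_card_filter (by positivity) (abs_nonneg _) hK
    _ = S / K * ∑ k ∈ range K, pairCorr a α (((k : ℕ) + 1) * S / K) N := by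
        rw [← mul_sum, hswap, mul_sum, mul_sum]
        refine sum_congr rfl fun k _ => ?_
        rw [pairCorr_eq_card_offDiag_div]
        ring

lemma eventually_overlapSum_le (a : ℕ → ℕ) (α : ℝ)
    (h : ∀ s : ℝ, 0 < s → Tendsto (fun N => pairCorr a α s N) atTop (nhds (2 * s)))
    {S η : ℝ} (hS : 0 < S) (hη : 0 < η) :
    ∀ᶠ N : ℕ in atTop, overlapSum (Icc 1 N) (fun n => α * a n) (S / N) ≤ S ^ 2 + η := by
  obtain ⟨K, hK⟩ := exists_nat_gt (S ^ 2 / η)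
  have hK0 : (0 : ℝ) < K := lt_of_le_of_lt (by positivity) hK
  have hgauss : ∀ n : ℕ, ∑ k ∈ range n, ((k : ℝ) + 1) = n * (n + 1) / 2 := fun n => by
    induction n with
    | zero => simp
    | succ n ih => rw [sum_range_succ, ih]; push_cast; ring
  have hlim : Tendsto (fun N => S / K * ∑ k ∈ range K, pairCorr a α (((k : ℕ) + 1) * S / K) N)
      atTop (nhds (S ^ 2 + S ^ 2 / K)) := by
    have := (tendsto_finsetSum (range K) fun k _ =>
      h (((k : ℕ) + 1) * S / K) (by positivity)).const_mul (S / K)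
    convert this using 2
    rw [show ∑ k ∈ range K, 2 * (((k : ℝ) + 1) * S / K) = 2 * S / K * ∑ k ∈ range K, ((k : ℝ) + 1)
      by rw [mul_sum]; exact sum_congr rfl fun _ _ => by ring, hgauss]
    field_simp
  have hlt : S ^ 2 + S ^ 2 / K < S ^ 2 + η := by
    rw [div_lt_iff₀ hη] at hK
    rw [add_lt_add_iff_left, div_lt_iff₀ hK0]
    linarith
  filter_upwards [hlim.eventually (gt_mem_nhds hlt)] with N hN
  exact (overlapSum_le_sum_pairCorr a α hS.le (Nat.cast_pos.1 hK0) N).trans hN.le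

noncomputable def fractFreq (x : ℕ → ℝ) (u v : ℝ) (N : ℕ) : ℝ :=
  #{n ∈ Icc 1 N | fract (x n) ∈ Set.Ico u v} / N

section Frequencies

variable (x : ℕ → ℝ)

lemma fractFreq_le_one (u v : ℝ) (N : ℕ) : fractFreq x u v N ≤ 1 :=
  div_le_one_of_le₀ (by simpa using card_filter_le (Icc 1 N) _) (Nat.cast_nonneg N)

lemma fractFreq_add_fractFreq_add_fractFreq {u v : ℝ} (huv : u ≤ v) {N : ℕ} (hN : 0 < N) :
    fractFreq x 0 u N + fractFreq x u v N + fractFreq x v 1 N = 1 := by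
  have hsplit : ∀ n ∈ Icc 1 N, ((if fract (x n) ∈ Set.Ico 0 u then 1 else 0)
      + (if fract (x n) ∈ Set.Ico u v then 1 else 0)
      + (if fract (x n) ∈ Set.Ico v 1 then 1 else 0) : ℕ) = 1 := by
    intro n _
    have h0 := Int.fract_nonneg (x n)
    have h1 := Int.fract_lt_one (x n)
    rcases lt_or_ge (fract (x n)) u with hxu | hux
    · simp [hxu, h0, (hxu.trans_le huv).not_ge, hxu.not_ge]
    rcases lt_or_ge (fract (x n)) v with hxv | hvx
    · simp [hxv, hux, hxv.not_ge]
    · simp [hvx, h1, hux.not_gt]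
  have hcard : #{n ∈ Icc 1 N | fract (x n) ∈ Set.Ico 0 u}
      + #{n ∈ Icc 1 N | fract (x n) ∈ Set.Ico u v}
      + #{n ∈ Icc 1 N | fract (x n) ∈ Set.Ico v 1} = N := by
    simp only [card_filter, ← sum_add_distrib, sum_congr rfl hsplit, sum_const, Nat.card_Icc,
      smul_eq_mul, mul_one, Nat.add_sub_cancel]
  rw [fractFreq, fractFreq, fractFreq, ← add_div, ← add_div]
  rw [div_eq_one_iff_eq (by positivity)]
  exact_mod_cast hcard

lemma tendsto_fractFreq_of_eventually_le
    (hle : ∀ u v : ℝ, u ≤ v → ∀ ε > 0, ∀ᶠ N in atTop, fractFreq x u v N ≤ v - u + ε)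
    {u v : ℝ} (hu : 0 ≤ u) (huv : u ≤ v) (hv : v ≤ 1) :
    Tendsto (fractFreq x u v) atTop (nhds (v - u)) := by
  refine tendsto_order.2 ⟨fun b hb => ?_, fun b hb => ?_⟩
  · filter_upwards [hle 0 u hu ((v - u - b) / 3) (by linarith),
      hle v 1 hv ((v - u - b) / 3) (by linarith),
      eventually_gt_atTop 0] with N h0u hv1 hN
    linarith [fractFreq_add_fractFreq_add_fractFreq x huv hN]
  · filter_upwards [hle u v huv ((b - (v - u)) / 2) (by linarith)] with N h
    linarith

lemma eventually_fractFreq_le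
    (hx : ∀ S > 0, ∀ η > 0, ∀ᶠ N : ℕ in atTop, overlapSum (Icc 1 N) x (S / N) ≤ S ^ 2 + η)
    {u v : ℝ} (huv : u ≤ v) {ε : ℝ} (hε : 0 < ε) :
    ∀ᶠ N in atTop, fractFreq x u v N ≤ v - u + ε := by
  -- This choice makes `√(2 * S) = S * (ε / 2)`.
  set S := 8 / ε ^ 2
  have hS : 0 < S := by positivity
  filter_upwards [hx S hS S hS, eventually_gt_atTop 0,
    tendsto_natCast_atTop_atTop.eventually_ge_atTop (2 * S / ε),
    tendsto_natCast_atTop_atTop.eventually_ge_atTop (2 * S)] with N hE hN hNε hN2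
  have hN' : (0 : ℝ) < N := by exact_mod_cast hN
  set δ := S / N
  have hδε : δ ≤ ε / 2 := by
    rw [div_le_iff₀ hN']; rw [div_le_iff₀ hε] at hNε; linarith
  by_cases hvδ : v - u + δ ≤ 1
  swap
  · linarith [fractFreq_le_one x u v N]
  have hδ0 : 0 ≤ δ := by positivity
  have hδ : δ ≤ 1 / 2 := by rw [div_le_iff₀ hN']; linarith
  have hcore := mul_card_fract_mem_Ico_sub_le_sqrt (Icc 1 N) x hδ0 hδ huv hvδ
  rw [Nat.card_Icc, Nat.add_sub_cancel, show (N : ℝ) * δ = S by simp only [δ]; field_simp] at hcore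
  have hsqrt : √((v - u + δ) * (S + overlapSum (Icc 1 N) x δ - S ^ 2)) ≤ S * (ε / 2) := by
    rw [Real.sqrt_le_iff]
    refine ⟨by positivity, ?_⟩
    have hsq : (S * (ε / 2)) ^ 2 = 2 * S := by simp only [S]; field_simp; ring
    nlinarith [mul_nonneg (by linarith : 0 ≤ v - u + δ)
      (by linarith : 0 ≤ 2 * S - (S + overlapSum (Icc 1 N) x δ - S ^ 2))]
  have hfreq : δ * #{n ∈ Icc 1 N | fract (x n) ∈ Set.Ico u v} = S * fractFreq x u v N := by
    rw [fractFreq]; ring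
  have : S * (fractFreq x u v N - (v - u + δ)) ≤ S * (ε / 2) := by linarith
  linarith [le_of_mul_le_mul_left this hS]

end Frequencies

theorem equidistributed_of_poissonian_pairCorr_general (a : ℕ → ℕ) (α : ℝ)
    (h : ∀ s : ℝ, 0 < s → Tendsto (fun N => pairCorr a α s N) atTop (nhds (2 * s))) :
    ∀ u v : ℝ, 0 ≤ u → u ≤ v → v ≤ 1 →
      Tendsto (fun N : ℕ =>
          (((Finset.Icc 1 N).filter (fun n => Int.fract (α * a n) ∈ Set.Ico u v)).card : ℝ) / N)
        atTop (nhds (v - u)) := fun _ _ hu huv hv =>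
  tendsto_fractFreq_of_eventually_le _
    (fun _ _ huv _ hε => eventually_fractFreq_le _
      (fun _ hS _ hη => eventually_overlapSum_le a α h hS hη) huv hε) hu huv hv

/-- If the pair correlations of `(α a_n)` are Poissonian (for every `s > 0`), then the
sequence `(α·a_n mod 1)` is equidistributed in `ℝ/ℤ`. -/
theorem equidistributed_of_poissonian_pairCorr (a : ℕ → ℕ) (ha : StrictMono a) (α : ℝ)
    (h : ∀ s : ℝ, 0 < s → Tendsto (fun N => pairCorr a α s N) atTop (nhds (2 * s))) :
    ∀ u v : ℝ, 0 ≤ u → u ≤ v → v ≤ 1 →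
      Tendsto (fun N : ℕ =>
          (((Finset.Icc 1 N).filter (fun n => Int.fract (α * a n) ∈ Set.Ico u v)).card : ℝ) / N)
        atTop (nhds (v - u)) :=
  equidistributed_of_poissonian_pairCorr_general a α h
end

section
/- The set of all natural numbers (i.e. the sequence a_n = n) is not metric Poissonian. -/
open MeasureTheory Filter Finset
open scoped Classical

/-! For irrational `α`, Dirichlet's theorem gives reduced fractions `p/q` with `|α - p/q| < 1/q²` and
`q` arbitrarily large. For `0 < |k| ≤ q/2` the number `kp/q` is at distance at least `1/q` from the
integers, and `kα` differs from it by less than `1/(2q)`, so `‖kα‖ > 1/(2q)`. Hence for `N = ⌊q/2⌋`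
no pair `i ≠ j ≤ N` satisfies `‖α(i - j)‖ ≤ (1/8)/N`, i.e. `F(ℕ, α, 1/8, N) = 0` for infinitely
many `N`, which is incompatible with the limit `1/4`. Almost every `α` is irrational. -/

lemma intDist_le_intDist_add_abs_sub (x y : ℝ) : intDist x ≤ intDist y + |x - y| :=
  calc intDist x ≤ |x - round y| := round_le x (round y)
    _ ≤ |x - y| + |y - round y| := abs_sub_le _ _ _
    _ = intDist y + |x - y| := add_comm _ _

lemma one_div_den_le_intDist_rat_mul_int {q : ℚ} {k : ℤ} (hk : ¬ (q.den : ℤ) ∣ k) :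
    1 / (q.den : ℝ) ≤ intDist (q * k) := by
  have hd : (0 : ℝ) < q.den := by positivity
  set m := round ((q : ℝ) * k)
  have hne : q.num * k - m * q.den ≠ 0 := by
    intro h
    have hcop : IsCoprime (q.den : ℤ) q.num :=
      Int.isCoprime_iff_gcd_eq_one.mpr (by simpa [Int.gcd, Nat.coprime_comm] using q.reduced)
    exact hk (hcop.dvd_of_dvd_mul_left ⟨m, by linarith⟩)
  have hsub : (q : ℝ) * k - m = ((q.num * k - m * q.den : ℤ) : ℝ) / q.den := by
    push_cast; rw [Rat.cast_def]; field_simp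
  rw [intDist, hsub, abs_div, Nat.abs_cast, div_le_div_iff_of_pos_right hd]
  exact_mod_cast Int.one_le_abs hne

lemma Rat.finite_setOf_abs_le_and_den_le (R D : ℕ) : {q : ℚ | |q| ≤ R ∧ q.den ≤ D}.Finite := by
  refine ((Set.finite_Icc (-(R * D : ℤ)) (R * D)).prod (Set.finite_Iic D)).image
    (fun p : ℤ × ℕ => (p.1 : ℚ) / p.2) |>.subset ?_
  rintro q ⟨hqR, hqD⟩
  refine ⟨(q.num, q.den), ⟨abs_le.mp ?_, hqD⟩, Rat.num_div_den q⟩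
  have : |(q.num : ℚ)| ≤ R * D := by
    rw [← Rat.mul_den_eq_num, abs_mul, Nat.abs_cast]
    exact mul_le_mul hqR (by exact_mod_cast hqD) (by positivity) (by positivity)
  exact_mod_cast this

lemma Irrational.exists_rat_abs_sub_lt_one_div_den_sq_and_le_den {α : ℝ} (hα : Irrational α)
    (D : ℕ) : ∃ q : ℚ, |α - q| < 1 / (q.den : ℝ) ^ 2 ∧ D ≤ q.den := by
  set R := ⌈|α|⌉₊ + 1
  obtain ⟨q, hq, hqD⟩ := ((Real.infinite_rat_abs_sub_lt_one_div_den_sq_of_irrational hα).sdiff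
    (Rat.finite_setOf_abs_le_and_den_le R D)).nonempty
  have hq1 : |α - q| < 1 := hq.trans_le <| by
    rw [div_le_one (by positivity)]
    exact one_le_pow₀ (by exact_mod_cast q.pos)
  have hqR : |q| ≤ R := by
    have : |(q : ℝ)| ≤ R := by
      have := abs_sub_abs_le_abs_sub (q : ℝ) α
      have := Nat.le_ceil |α|
      rw [abs_sub_comm] at hq1
      push_cast [R]; linarith
    exact_mod_cast this
  exact ⟨q, hq, by by_contra! h; exact hqD ⟨hqR, by omega⟩⟩

lemma one_div_two_mul_den_lt_intDist_mul_int {α : ℝ} {q : ℚ} (hq : |α - q| < 1 / (q.den : ℝ) ^ 2)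
    {k : ℤ} (hk0 : k ≠ 0) (hk : 2 * |k| ≤ q.den) : 1 / (2 * q.den : ℝ) < intDist (α * k) := by
  have hd : (0 : ℝ) < q.den := by positivity
  have hndvd : ¬ (q.den : ℤ) ∣ k := fun h => by
    have := Int.le_of_dvd (abs_pos.mpr hk0) ((dvd_abs _ _).mpr h)
    have := abs_pos.mpr hk0
    omega
  have hkR : 2 * |(k : ℝ)| ≤ q.den := by exact_mod_cast hk
  have hclose : |α * k - q * k| < 1 / (2 * q.den : ℝ) :=
    calc |α * k - q * k| = |α - q| * |(k : ℝ)| := by rw [← abs_mul, sub_mul]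
      _ < 1 / (q.den : ℝ) ^ 2 * |(k : ℝ)| :=
        mul_lt_mul_of_pos_right hq (abs_pos.mpr (Int.cast_ne_zero.mpr hk0))
      _ ≤ 1 / (q.den : ℝ) ^ 2 * (q.den / 2) := by gcongr; linarith
      _ = 1 / (2 * q.den : ℝ) := by field_simp
  have hfar := one_div_den_le_intDist_rat_mul_int hndvd
  have htri := intDist_le_intDist_add_abs_sub ((q : ℝ) * k) (α * k)
  rw [abs_sub_comm] at htri
  have : 1 / (q.den : ℝ) = 1 / (2 * q.den) + 1 / (2 * q.den) := by field_simp; norm_num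
  linarith

lemma pairCorr_id_eq_zero {α s : ℝ} {q : ℚ} (hq : |α - q| < 1 / (q.den : ℝ) ^ 2) {N : ℕ}
    (hN : 2 * N ≤ q.den) (hs : 2 * s * q.den ≤ N) : pairCorr (fun n => n) α s N = 0 := by
  rw [pairCorr, Finset.filter_false_of_mem, Finset.card_empty, Nat.cast_zero, zero_div]
  rintro ⟨i, j⟩ hij ⟨hne, hle⟩
  simp only [Finset.mem_product, Finset.mem_Icc] at hij
  have hN0 : (0 : ℝ) < N := by exact_mod_cast (by omega : 0 < N)
  have hsN : s / N ≤ 1 / (2 * q.den : ℝ) := by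
    rw [div_le_div_iff₀ hN0 (by positivity)]
    linarith
  have hk : 2 * |(i : ℤ) - j| ≤ q.den := by
    have := abs_sub_lt_iff.mpr (⟨by omega, by omega⟩ : (i : ℤ) - j < N ∧ (j : ℤ) - i < N)
    omega
  have hfar := one_div_two_mul_den_lt_intDist_mul_int hq (k := i - j) (by omega) hk
  push_cast at hfar
  linarith

lemma Irrational.frequently_pairCorr_id_eq_zero {α : ℝ} (hα : Irrational α) :
    ∃ᶠ N in atTop, pairCorr (fun n => n) α (1 / 8) N = 0 := by
  refine frequently_atTop.mpr fun N₀ => ?_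
  obtain ⟨q, hq, hden⟩ := hα.exists_rat_abs_sub_lt_one_div_den_sq_and_le_den (2 * N₀ + 2)
  refine ⟨q.den / 2, by omega, pairCorr_id_eq_zero hq (by omega) ?_⟩
  have : (q.den : ℝ) ≤ 4 * (q.den / 2 : ℕ) := by
    exact_mod_cast (by omega : q.den ≤ 4 * (q.den / 2))
  linarith

/-- The set of all natural numbers (the sequence `a_n = n`) is not metric Poissonian. -/
theorem naturals_not_metricPoissonian : ¬ MetricPoissonian (fun n => n) := by
  intro h
  have hirr : ∀ᵐ α ∂(volume.restrict (Set.Icc (0:ℝ) 1)), Irrational α :=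
    ae_restrict_of_ae ((Set.countable_range _).ae_notMem volume)
  have : (ae (volume.restrict (Set.Icc (0:ℝ) 1))).NeBot := ae_restrict_neBot.mpr (by simp)
  obtain ⟨α, hlim, hα⟩ := (h.and hirr).exists
  have := tendsto_nhds_unique_of_frequently_eq (hlim (1 / 8) (by norm_num)) tendsto_const_nhds
    hα.frequently_pairCorr_id_eq_zero
  norm_num at this
end
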